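/- (Hersch balancing lemma, measure-theoretic form) Let μ be a finite measure on a measurable space Σ and F : Σ → ℂ measurable with |F| < 1 μ-almost everywhere. Then there exists a₀ ∈ ℂ with |a₀| < 1 such that ∫ (F - a₀)/(1 - conj(a₀)·F) dμ = 0. -/

import Mathlib

open MeasureTheory Complex Metric Set
open scoped Real ComplexConjugate

/-!
The map `a ↦ ∫ m_a ∘ F dμ` is continuous on the closed unit disk and equals `-μ(X) a` on the
unit circle. If it had no zero in the disk, it would lift through `exp` to a continuous logarithm
`L` on the (simply connected) disk; along the circle, `L(e^{it}) - it` would then be a continuous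
logarithm of a constant, hence constant, which fails at `t = 2π`.
-/

theorem IsPreconnected.constant_of_exp_eq {α : Type*} [TopologicalSpace α] {S : Set α}
    (hS : IsPreconnected S) {f : α → ℂ} (hf : ContinuousOn f S) {c : ℂ}
    (hexp : ∀ x ∈ S, exp (f x) = c) {x y : α} (hx : x ∈ S) (hy : y ∈ S) : f x = f y := by
  have hdisc : IsDiscrete (AddSubgroup.zmultiples (2 * π * I) : Set ℂ) :=
    SetLike.isDiscrete_iff_discreteTopology.mpr inferInstance
  have hmaps : MapsTo (fun z => f z - f x) S (AddSubgroup.zmultiples (2 * π * I)) := by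
    intro z hz
    obtain ⟨n, hn⟩ := exp_eq_exp_iff_exists_int.mp ((hexp z hz).trans (hexp x hx).symm)
    exact ⟨n, by simp [hn]⟩
  have := hS.constant_of_mapsTo hdisc (hf.sub continuousOn_const) hmaps hy hx
  simpa [sub_eq_zero, eq_comm] using this

theorem exists_norm_lt_one_eq_zero_of_eq_mul_on_sphere {g : ℂ → ℂ}
    (hg : ContinuousOn g (closedBall 0 1)) {c : ℂ} (hc : c ≠ 0)
    (hsphere : ∀ z, ‖z‖ = 1 → g z = c * z) : ∃ z, ‖z‖ < 1 ∧ g z = 0 := by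
  suffices ∃ z ∈ closedBall (0 : ℂ) 1, g z = 0 by
    obtain ⟨z, hz, hgz⟩ := this
    refine ⟨z, (mem_closedBall_zero_iff.mp hz).lt_of_ne fun h1 => ?_, hgz⟩
    have hz0 : z ≠ 0 := by rintro rfl; simp at h1
    exact mul_ne_zero hc hz0 (hsphere z h1 ▸ hgz)
  by_contra! hne
  let D := closedBall (0 : ℂ) 1
  let f : C(D, ℂ) := ⟨fun z => g z, hg.domRestrict⟩
  have : ContractibleSpace D := contractibleSpace_closedBall zero_le_one
  have : LocallyPathConnectedSpace D := (convex_closedBall 0 1).locallyPathConnectedSpace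
  obtain ⟨L, -, hL⟩ := (isCoveringMapOn_exp.existsUnique_continuousMap_lifts
    f (a₀ := ⟨0, by simp [D]⟩) (exp_log (hne 0 (by simp)))
    fun z => hne z z.2).exists
  let p : ℝ → D := fun t => ⟨exp (t * I), by simp [D]⟩
  have hp : Continuous p := by fun_prop
  have hlift : ∀ t : ℝ, exp (L (p t) - t * I) = c := by
    intro t
    rw [exp_sub, ← Function.comp_apply (f := exp), hL]
    change g (exp (t * I)) / _ = c
    rw [hsphere _ (by simp)]
    field_simp [exp_ne_zero]
  have := isPreconnected_univ.constant_of_exp_eq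
    ((L.continuous.comp hp).sub (by fun_prop)).continuousOn (fun t _ => hlift t) (mem_univ (2 * π)) (mem_univ 0)
  have hp2 : p (2 * π) = p 0 := by simp [p, exp_two_pi_mul_I]
  simp [hp2, Real.pi_ne_zero, I_ne_zero] at this

theorem one_sub_conj_mul_ne_zero {a z : ℂ} (ha : ‖a‖ ≤ 1) (hz : ‖z‖ < 1) :
    1 - conj a * z ≠ 0 := by
  refine sub_ne_zero.mpr fun h => ?_
  have : ‖conj a * z‖ < 1 := by
    rw [norm_mul, norm_conj]
    exact (mul_le_of_le_one_left (norm_nonneg z) ha).trans_lt hz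
  simp [← h] at this

theorem norm_div_one_sub_conj_mul_le_one {a z : ℂ} (ha : ‖a‖ ≤ 1) (hz : ‖z‖ < 1) :
    ‖(z - a) / (1 - conj a * z)‖ ≤ 1 := by
  rw [norm_div, div_le_one (norm_pos_iff.mpr (one_sub_conj_mul_ne_zero ha hz)),
    ← sq_le_sq₀ (norm_nonneg _) (norm_nonneg _), Complex.sq_norm, Complex.sq_norm]
  have key : normSq (1 - conj a * z) - normSq (z - a) = (1 - normSq a) * (1 - normSq z) := by
    simp only [normSq_apply, mul_re, mul_im, sub_re, sub_im, conj_re, conj_im, one_re, one_im]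
    ring
  have hna : normSq a ≤ 1 := by rw [← Complex.sq_norm]; nlinarith [norm_nonneg a]
  have hnz : normSq z ≤ 1 := by rw [← Complex.sq_norm]; nlinarith [norm_nonneg z]
  nlinarith

theorem div_one_sub_conj_mul_eq_neg {a z : ℂ} (ha : ‖a‖ = 1) (hz : ‖z‖ < 1) :
    (z - a) / (1 - conj a * z) = -a := by
  have hconj : conj a * a = 1 := by
    rw [mul_comm, mul_conj, normSq_eq_norm_sq, ha]; simp
  rw [div_eq_iff (one_sub_conj_mul_ne_zero ha.le hz)]
  linear_combination (-z) * hconj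

section
variable {X : Type*} [MeasurableSpace X] (μ : Measure X) {F : X → ℂ}

theorem continuousOn_integral_div_one_sub_conj_mul [IsFiniteMeasure μ]
    (hF : AEMeasurable F μ) (hF1 : ∀ᵐ x ∂μ, ‖F x‖ < 1) :
    ContinuousOn (fun a => ∫ x, (F x - a) / (1 - conj a * F x) ∂μ) (closedBall 0 1) := by
  refine continuousOn_of_dominated (bound := fun _ => 1)
    (fun a _ => (by fun_prop : AEMeasurable _ μ).aestronglyMeasurable)
    (fun a ha => hF1.mono fun x hx => norm_div_one_sub_conj_mul_le_one
      (mem_closedBall_zero_iff.mp ha) hx) (integrable_const 1) ?_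
  filter_upwards [hF1] with x hx a ha
  exact ((continuousAt_const.sub continuousAt_id).div
    (continuousAt_const.sub (continuous_conj.continuousAt.mul continuousAt_const))
    (one_sub_conj_mul_ne_zero (mem_closedBall_zero_iff.mp ha) hx)).continuousWithinAt

theorem integral_div_one_sub_conj_mul_of_norm_eq_one (hF1 : ∀ᵐ x ∂μ, ‖F x‖ < 1) {a : ℂ}
    (ha : ‖a‖ = 1) :
    ∫ x, (F x - a) / (1 - conj a * F x) ∂μ = -(μ.real univ : ℂ) * a := by
  rw [integral_congr_ae (hF1.mono fun x hx => div_one_sub_conj_mul_eq_neg ha hx),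
    integral_const, real_smul]
  ring

end

theorem hersch_balancing
    {X : Type*} [MeasurableSpace X] (μ : Measure X) [IsFiniteMeasure μ]
    (F : X → ℂ) (hF : Measurable F) (hF1 : ∀ᵐ x ∂μ, ‖F x‖ < 1) :
    ∃ a₀ : ℂ, ‖a₀‖ < 1 ∧
      ∫ x, (F x - a₀) / (1 - (starRingEnd ℂ) a₀ * F x) ∂μ = 0 := by
  rcases eq_zero_or_neZero μ with rfl | _
  · exact ⟨0, by simp, by simp⟩
  exact exists_norm_lt_one_eq_zero_of_eq_mul_on_sphere
    (continuousOn_integral_div_one_sub_conj_mul μ hF.aemeasurable hF1)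
    (neg_ne_zero.mpr (ofReal_ne_zero.mpr measureReal_univ_pos.ne'))
    fun a ha => integral_div_one_sub_conj_mul_of_norm_eq_one μ hF1 ha
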